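/- With n = 4 and k = 2 (the 3-dimensional lens space L₄³ = S³/ℤ₄, with the charge doubled to 2 by the Spin-ℤ₈ structure): ηD(4,2,2) − ηD(4,2,0) = −1/2. (Combined with the index values Index^D(ℍP²) = 0 and Index^RS(ℍP²) = −1, this gives the value 1/2 ∈ ℝ/ℤ of the type IIB duality anomaly on the generator ℍP² × L₄³ of a ℤ₂ factor of the bordism group Ω₁₁^{Spin-GL⁺(2,ℤ)}.) -/

import Mathlib

/-!
The charge-0 term cancels inside the sum, leaving the weights `ω^{-qj} - 1`. For `n = 2q` the
character `ω^{-qj}` is `(-1)^j`, so only odd `j` contribute, each with weight `-2`; and for odd `j`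
one has `(2 sin(πj/4))² = 2 - 2 cos(πj/2) = 2`. The sum over `j = 1, 2, 3` is therefore `-2`, and
the prefactor `-1/(4 i²) = 1/4` gives `-1/2`.
-/

open scoped BigOperators
/-- The Atiyah–Patodi–Singer eta invariant of the charge-`q` Dirac operator on the
lens space `L_n^{2k-1} = S^{2k-1}/ℤ_n`. -/
noncomputable def etaD (n k : ℕ) (q : ℤ) : ℂ :=
  -(1 / ((n : ℂ) * Complex.I ^ k)) *
    ∑ j ∈ Finset.Icc 1 (n - 1),
      Complex.exp (-(2 * (Real.pi : ℂ) * Complex.I * (q : ℂ) * (j : ℂ)) / (n : ℂ)) /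
        (2 * ((Real.sin (Real.pi * (j : ℝ) / (n : ℝ)) : ℝ) : ℂ)) ^ k

open Complex Finset

theorem etaD_sub_etaD_zero (n k : ℕ) (q : ℤ) :
    etaD n k q - etaD n k 0 = -(1 / ((n : ℂ) * I ^ k)) *
      ∑ j ∈ Icc 1 (n - 1),
        (exp (-(2 * (Real.pi : ℂ) * I * (q : ℂ) * (j : ℂ)) / (n : ℂ)) - 1) /
          (2 * ((Real.sin (Real.pi * (j : ℝ) / (n : ℝ)) : ℝ) : ℂ)) ^ k := by
  simp only [etaD, Int.cast_zero, mul_zero, zero_mul, neg_zero, zero_div, exp_zero, ← mul_sub,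
    ← sum_sub_distrib, sub_div]

theorem exp_neg_two_pi_I_mul_div_eq_neg_one_pow {n : ℕ} {q : ℤ} (hn : (n : ℂ) = 2 * q)
    (hq : q ≠ 0) (j : ℕ) :
    exp (-(2 * (Real.pi : ℂ) * I * (q : ℂ) * (j : ℂ)) / (n : ℂ)) = (-1) ^ j := by
  have hq' : (q : ℂ) ≠ 0 := Int.cast_ne_zero.mpr hq
  rw [hn, show -(2 * (Real.pi : ℂ) * I * q * j) / (2 * q) = j * -(Real.pi * I) by field_simp,
    exp_nat_mul, exp_neg, exp_pi_mul_I, inv_neg, inv_one]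

theorem two_mul_sin_odd_mul_pi_div_four_sq {j : ℕ} (hj : Odd j) :
    (2 * Real.sin (Real.pi * j / 4)) ^ 2 = 2 := by
  obtain ⟨m, rfl⟩ := hj
  rw [mul_pow, Real.sin_sq_eq_half_sub, Real.cos_eq_zero_iff.mpr ⟨m, by push_cast; ring⟩]
  norm_num

theorem neg_one_pow_sub_one_div_two_mul_sin_pi_div_four_sq (j : ℕ) :
    ((-1 : ℂ) ^ j - 1) / (2 * ((Real.sin (Real.pi * j / 4) : ℝ) : ℂ)) ^ 2 =
      if Even j then 0 else -1 := by
  rcases j.even_or_odd with hj | hj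
  · simp [hj, hj.neg_one_pow]
  · have hsin : (2 * ((Real.sin (Real.pi * j / 4) : ℝ) : ℂ)) ^ 2 = 2 := by
      exact_mod_cast two_mul_sin_odd_mul_pi_div_four_sq hj
    rw [if_neg (Nat.not_even_iff_odd.mpr hj), hj.neg_one_pow, hsin]
    norm_num

/-- On the 3-dimensional lens space `L₄³ = S³/ℤ₄` (with the charge doubled to `2`
by the Spin-ℤ₈ structure), the difference of the eta invariants of the charge-`2`
and charge-`0` Dirac operators equals `-1/2`. -/
theorem etaD_L4_3 : etaD 4 2 2 - etaD 4 2 0 = -(1 / 2) := by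
  rw [etaD_sub_etaD_zero]
  simp_rw [exp_neg_two_pi_I_mul_div_eq_neg_one_pow (n := 4) (q := 2) (by norm_num) two_ne_zero]
  simp only [Nat.cast_ofNat, neg_one_pow_sub_one_div_two_mul_sin_pi_div_four_sq]
  rw [show Icc 1 (4 - 1) = {1, 2, 3} from rfl]
  norm_num [sum_insert, I_sq]
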